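/- In any association scheme S, the complex product O^ϑ(S)O_ϑ(S) of the thin residue and the thin radical is a closed subset of S, and it is a singular subset of S. -/
import Mathlib


open scoped Classical

/-- An association scheme of class `d` on a nonempty finite set `X`:
a partition of `X × X` into nonempty relations `r 0, …, r d` with
`r 0` the diagonal, closed under converse (`star`), and with
intersection numbers `pNum i j k`. -/
structure AssocScheme (X : Type*) [Fintype X] [Nonempty X] (d : ℕ) where
  r : Fin (d + 1) → Set (X × X)
  r_nonempty : ∀ i, (r i).Nonempty
  existsUnique_rel : ∀ q : X × X, ∃! i, q ∈ r i
  r_zero : r 0 = {q : X × X | q.1 = q.2}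
  star : Fin (d + 1) → Fin (d + 1)
  mem_star : ∀ (i : Fin (d + 1)) (q : X × X), q ∈ r (star i) ↔ (q.2, q.1) ∈ r i
  pNum : Fin (d + 1) → Fin (d + 1) → Fin (d + 1) → ℕ
  ncard_eq : ∀ (i j k : Fin (d + 1)), ∀ q ∈ r k,
    {z : X | (q.1, z) ∈ r i ∧ (z, q.2) ∈ r j}.ncard = pNum i j k

namespace AssocScheme

variable {X : Type*} [Fintype X] [Nonempty X] {d : ℕ}

/-- The valency `k_i = p_{i i*}^0` of the relation `R_i`. -/
def val (S : AssocScheme X d) (i : Fin (d + 1)) : ℕ := S.pNum i (S.star i) 0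

/-- The complex product `UV = {R_k : p_{uv}^k > 0 for some R_u ∈ U, R_v ∈ V}`. -/
def cmul (S : AssocScheme X d) (U V : Set (Fin (d + 1))) : Set (Fin (d + 1)) :=
  {k | ∃ u ∈ U, ∃ v ∈ V, 0 < S.pNum u v k}

/-- A nonempty subset `T` is closed if `T*T ⊆ T`. -/
def IsClosedSubset (S : AssocScheme X d) (T : Set (Fin (d + 1))) : Prop :=
  T.Nonempty ∧ S.cmul (S.star '' T) T ⊆ T

/-- The thin radical `O_ϑ(S) = {R_i : k_i = 1}`. -/
def thinRadical (S : AssocScheme X d) : Set (Fin (d + 1)) := {i | S.val i = 1}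

/-- A closed subset `T` is strongly normal if `R_{i*} T R_i ⊆ T` for all `i`. -/
def IsStronglyNormal (S : AssocScheme X d) (T : Set (Fin (d + 1))) : Prop :=
  S.IsClosedSubset T ∧ ∀ i : Fin (d + 1), S.cmul (S.cmul {S.star i} T) {i} ⊆ T

/-- The thin residue `O^ϑ(S)`: the intersection of all strongly normal closed subsets. -/
def thinResidue (S : AssocScheme X d) : Set (Fin (d + 1)) :=
  ⋂₀ {T | S.IsStronglyNormal T}

/-- `⟨H⟩`: the intersection of all closed subsets containing `H`. -/
def closure (S : AssocScheme X d) (H : Set (Fin (d + 1))) : Set (Fin (d + 1)) :=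
  ⋂₀ {T | S.IsClosedSubset T ∧ H ⊆ T}

/-- The adjacency matrix `A̅_i` of `R_i`, with entries in `𝔽`. -/
noncomputable def adj (S : AssocScheme X d) (𝔽 : Type*) [Field 𝔽] (i : Fin (d + 1)) :
    Matrix X X 𝔽 :=
  Matrix.of fun x y => if (x, y) ∈ S.r i then 1 else 0

/-- `v` spans a trivial `𝔽S`-submodule of the regular `𝔽S`-module:
`v` is a nonzero element of `𝔽S` with `A̅_i v = k̅_i v` for all `i`. -/
def IsTrivialVector (S : AssocScheme X d) (𝔽 : Type*) [Field 𝔽] (v : Matrix X X 𝔽) : Prop :=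
  v ≠ 0 ∧ v ∈ Submodule.span 𝔽 (Set.range (S.adj 𝔽)) ∧
    ∀ i : Fin (d + 1), S.adj 𝔽 i * v = (S.val i : 𝔽) • v

/-- `S` is `p`-transitive over `𝔽` (of characteristic `p`) if the regular `𝔽S`-module
contains a unique trivial `𝔽S`-submodule. -/
def IsPTransitive (S : AssocScheme X d) (𝔽 : Type*) [Field 𝔽] : Prop :=
  ∃! W : Submodule 𝔽 (Matrix X X 𝔽),
    ∃ v : Matrix X X 𝔽, S.IsTrivialVector 𝔽 v ∧ W = Submodule.span 𝔽 {v}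

/-- A subset `T ⊆ S` is singular if `O_ϑ(S) ⊆ T` and
`R_x R_{y*} R_y R_z ⊆ T` for all `R_x ∈ O_ϑ(S)`, `R_y ∈ S`, `R_z ∈ T`. -/
def IsSingular (S : AssocScheme X d) (T : Set (Fin (d + 1))) : Prop :=
  S.thinRadical ⊆ T ∧ ∀ x ∈ S.thinRadical, ∀ y : Fin (d + 1), ∀ z ∈ T,
    S.cmul (S.cmul (S.cmul {x} {S.star y}) {y}) {z} ⊆ T

/-- `S_{p'} = {R_i ∈ S : p ∤ k_i}`. -/
def pPrimePart (S : AssocScheme X d) (p : ℕ) : Set (Fin (d + 1)) :=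
  {i | ¬ p ∣ S.val i}

end AssocScheme

section Aux

namespace AssocScheme

variable {X : Type*} [Fintype X] [Nonempty X] {d : ℕ} (S : AssocScheme X d)

lemma mem_r_zero (x : X) : (x, x) ∈ S.r 0 := by rw [S.r_zero]; rfl

lemma eq_of_mem {i j : Fin (d + 1)} {q : X × X} (hi : q ∈ S.r i) (hj : q ∈ S.r j) : i = j := by
  obtain ⟨k, _, hk⟩ := S.existsUnique_rel q
  rw [hk i hi, hk j hj]

lemma pNum_pos {i j k : Fin (d + 1)} {x y z : X} (hq : (x, y) ∈ S.r k)
    (h1 : (x, z) ∈ S.r i) (h2 : (z, y) ∈ S.r j) : 0 < S.pNum i j k := by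
  rw [← S.ncard_eq i j k (x, y) hq]
  exact (Set.ncard_pos (Set.toFinite _)).mpr ⟨z, h1, h2⟩

lemma exists_mid {i j k : Fin (d + 1)} {x y : X} (h : 0 < S.pNum i j k)
    (hq : (x, y) ∈ S.r k) : ∃ z, (x, z) ∈ S.r i ∧ (z, y) ∈ S.r j := by
  rw [← S.ncard_eq i j k (x, y) hq] at h
  exact (Set.ncard_pos (Set.toFinite _)).mp h

lemma star_star (i : Fin (d + 1)) : S.star (S.star i) = i := by
  obtain ⟨⟨a, b⟩, hab⟩ := S.r_nonempty i
  have : (a, b) ∈ S.r (S.star (S.star i)) := by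
    rw [S.mem_star, S.mem_star]; exact hab
  exact S.eq_of_mem this hab

lemma star_zero : S.star 0 = (0 : Fin (d + 1)) := by
  have x := Classical.arbitrary X
  have : (x, x) ∈ S.r (S.star 0) := by rw [S.mem_star]; exact S.mem_r_zero x
  exact S.eq_of_mem this (S.mem_r_zero x)

lemma val_eq_ncard (j : Fin (d + 1)) (x : X) :
    S.val j = {z : X | (x, z) ∈ S.r j}.ncard := by
  have h := S.ncard_eq j (S.star j) 0 (x, x) (S.mem_r_zero x)
  rw [AssocScheme.val, ← h]
  congr 1
  ext z
  simp only [Set.mem_setOf_eq, and_iff_left_iff_imp]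
  intro hz
  rw [S.mem_star]; exact hz

lemma exists_out (i : Fin (d + 1)) (x : X) : ∃ z, (x, z) ∈ S.r i := by
  obtain ⟨⟨a, b⟩, hab⟩ := S.r_nonempty i
  have hpos : 0 < S.val i := by
    rw [S.val_eq_ncard i a]
    exact (Set.ncard_pos (Set.toFinite _)).mpr ⟨b, hab⟩
  rw [S.val_eq_ncard i x] at hpos
  exact (Set.ncard_pos (Set.toFinite _)).mp hpos

lemma val_pos (i : Fin (d + 1)) : 0 < S.val i := by
  have x := Classical.arbitrary X
  rw [S.val_eq_ncard i x]
  obtain ⟨z, hz⟩ := S.exists_out i x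
  exact (Set.ncard_pos (Set.toFinite _)).mpr ⟨z, hz⟩

lemma exists_in (i : Fin (d + 1)) (x : X) : ∃ z, (z, x) ∈ S.r i := by
  obtain ⟨z, hz⟩ := S.exists_out (S.star i) x
  rw [S.mem_star] at hz
  exact ⟨z, hz⟩

lemma pNum_zero_right {i : Fin (d + 1)} : 0 < S.pNum i 0 i := by
  obtain ⟨⟨a, b⟩, hab⟩ := S.r_nonempty i
  exact S.pNum_pos hab hab (S.mem_r_zero b)

lemma pNum_zero_left {i : Fin (d + 1)} : 0 < S.pNum 0 i i := by
  obtain ⟨⟨a, b⟩, hab⟩ := S.r_nonempty i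
  exact S.pNum_pos hab (S.mem_r_zero a) hab

lemma pNum_star_star {i j k : Fin (d + 1)} (h : 0 < S.pNum i j k) :
    0 < S.pNum (S.star j) (S.star i) (S.star k) := by
  obtain ⟨⟨a, b⟩, hab⟩ := S.r_nonempty k
  obtain ⟨z, h1, h2⟩ := S.exists_mid h hab
  have hba : (b, a) ∈ S.r (S.star k) := by rw [S.mem_star]; exact hab
  have hz1 : (b, z) ∈ S.r (S.star j) := by rw [S.mem_star]; exact h2
  have hz2 : (z, a) ∈ S.r (S.star i) := by rw [S.mem_star]; exact h1
  exact S.pNum_pos hba hz1 hz2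

lemma cmul_assoc_aux {u v w k : Fin (d + 1)}
    (h : ∃ l, 0 < S.pNum u v l ∧ 0 < S.pNum l w k) :
    ∃ l, 0 < S.pNum v w l ∧ 0 < S.pNum u l k := by
  obtain ⟨l, h1, h2⟩ := h
  obtain ⟨⟨x, ω⟩, hx⟩ := S.r_nonempty k
  obtain ⟨z, hz1, hz2⟩ := S.exists_mid h2 hx
  obtain ⟨y, hy1, hy2⟩ := S.exists_mid h1 hz1
  obtain ⟨l', hl', _⟩ := S.existsUnique_rel (y, ω)
  exact ⟨l', S.pNum_pos hl' hy2 hz2, S.pNum_pos hx hy1 hl'⟩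

lemma cmul_assoc_aux' {u v w k : Fin (d + 1)}
    (h : ∃ l, 0 < S.pNum v w l ∧ 0 < S.pNum u l k) :
    ∃ l, 0 < S.pNum u v l ∧ 0 < S.pNum l w k := by
  obtain ⟨l, h1, h2⟩ := h
  obtain ⟨⟨x, ω⟩, hx⟩ := S.r_nonempty k
  obtain ⟨y, hy1, hy2⟩ := S.exists_mid h2 hx
  obtain ⟨z, hz1, hz2⟩ := S.exists_mid h1 hy2
  obtain ⟨l', hl', _⟩ := S.existsUnique_rel (x, z)
  exact ⟨l', S.pNum_pos hl' hy1 hz1, S.pNum_pos hx hl' hz2⟩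

lemma cmul_assoc (U V W : Set (Fin (d + 1))) :
    S.cmul (S.cmul U V) W = S.cmul U (S.cmul V W) := by
  ext k
  simp only [AssocScheme.cmul, Set.mem_setOf_eq]
  constructor
  · rintro ⟨l, ⟨u, hu, v, hv, hp⟩, w, hw, hq⟩
    obtain ⟨l', h1, h2⟩ := S.cmul_assoc_aux ⟨l, hp, hq⟩
    exact ⟨u, hu, l', ⟨v, hv, w, hw, h1⟩, h2⟩
  · rintro ⟨u, hu, l, ⟨v, hv, w, hw, hp⟩, hq⟩
    obtain ⟨l', h1, h2⟩ := S.cmul_assoc_aux' ⟨l, hp, hq⟩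
    exact ⟨l', ⟨u, hu, v, hv, h1⟩, w, hw, h2⟩

lemma cmul_mono {U V U' V' : Set (Fin (d + 1))} (hU : U ⊆ U') (hV : V ⊆ V') :
    S.cmul U V ⊆ S.cmul U' V' := by
  rintro k ⟨u, hu, v, hv, hp⟩
  exact ⟨u, hU hu, v, hV hv, hp⟩

lemma zero_mem_closed {T : Set (Fin (d + 1))} (hT : S.IsClosedSubset T) : (0 : Fin (d + 1)) ∈ T := by
  obtain ⟨⟨i, hi⟩, hcl⟩ := hT
  apply hcl
  refine ⟨S.star i, ⟨i, hi, rfl⟩, i, hi, ?_⟩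
  obtain ⟨⟨a, b⟩, hab⟩ := S.r_nonempty i
  have h2 : (b, a) ∈ S.r (S.star i) := by rw [S.mem_star]; exact hab
  exact S.pNum_pos (S.mem_r_zero b) h2 hab

lemma star_mem_closed {T : Set (Fin (d + 1))} (hT : S.IsClosedSubset T)
    {i : Fin (d + 1)} (hi : i ∈ T) : S.star i ∈ T := by
  apply hT.2
  exact ⟨S.star i, ⟨i, hi, rfl⟩, 0, S.zero_mem_closed hT, S.pNum_zero_right⟩

lemma cmul_self_closed {T : Set (Fin (d + 1))} (hT : S.IsClosedSubset T) :
    S.cmul T T ⊆ T := by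
  intro k hk
  apply hT.2
  refine S.cmul_mono ?_ (subset_refl T) hk
  intro i hi
  exact ⟨S.star i, S.star_mem_closed hT hi, (S.star_star i).symm ▸ rfl⟩

lemma thin_existsUnique {i : Fin (d + 1)} (hi : S.val i = 1) (x : X) :
    ∃! z, (x, z) ∈ S.r i := by
  have h := S.val_eq_ncard i x
  rw [hi] at h
  obtain ⟨a, ha⟩ := Set.ncard_eq_one.mp h.symm
  refine ⟨a, ?_, ?_⟩
  · have : a ∈ {z : X | (x, z) ∈ S.r i} := ha ▸ rfl
    exact this
  · intro y hy
    have : y ∈ ({a} : Set X) := ha ▸ hy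
    exact this

lemma val_zero : S.val (0 : Fin (d + 1)) = 1 := by
  have x := Classical.arbitrary X
  rw [S.val_eq_ncard 0 x]
  have : {z : X | (x, z) ∈ S.r 0} = {x} := by
    ext z
    simp only [Set.mem_setOf_eq, Set.mem_singleton_iff, S.r_zero]
    exact ⟨fun h => h.symm, fun h => h.symm⟩
  rw [this, Set.ncard_singleton]

lemma thin_star {i : Fin (d + 1)} (hi : S.val i = 1) : S.val (S.star i) = 1 := by
  choose f hf1 hf2 using fun x => S.thin_existsUnique hi x
  have hsurj : Function.Surjective f := by
    intro w
    obtain ⟨x, hx⟩ := S.exists_in i w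
    exact ⟨x, (hf2 x w hx).symm⟩
  have hinj : Function.Injective f := Finite.injective_iff_surjective.mpr hsurj
  have x := Classical.arbitrary X
  rw [S.val_eq_ncard (S.star i) x]
  have hset : {z : X | (x, z) ∈ S.r (S.star i)} = {z : X | f z = x} := by
    ext z
    simp only [Set.mem_setOf_eq, S.mem_star]
    constructor
    · intro h; exact (hf2 z x h).symm
    · intro h; rw [← h]; exact hf1 z
  obtain ⟨a, ha⟩ := hsurj x
  have : {z : X | f z = x} = {a} := by
    ext z
    simp only [Set.mem_setOf_eq, Set.mem_singleton_iff]
    constructor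
    · intro h; exact hinj (h.trans ha.symm)
    · intro h; rw [h]; exact ha
  rw [hset, this, Set.ncard_singleton]

lemma thin_mul {i j k : Fin (d + 1)} (hi : S.val i = 1) (hj : S.val j = 1)
    (hk : 0 < S.pNum i j k) : S.val k = 1 := by
  obtain ⟨⟨u, w⟩, huw⟩ := S.r_nonempty k
  rw [S.val_eq_ncard k u]
  have hsub : {z : X | (u, z) ∈ S.r k} = {w} := by
    ext w'
    simp only [Set.mem_setOf_eq, Set.mem_singleton_iff]
    constructor
    · intro hw'
      obtain ⟨z, hz1, hz2⟩ := S.exists_mid hk hw'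
      obtain ⟨z0, hz01, hz02⟩ := S.exists_mid hk huw
      have hz : z = z0 := by
        obtain ⟨a, _, ha2⟩ := S.thin_existsUnique hi u
        rw [ha2 z hz1, ha2 z0 hz01]
      obtain ⟨b, _, hb2⟩ := S.thin_existsUnique hj z
      rw [hb2 w' hz2, hb2 w (hz ▸ hz02)]
    · intro h; rw [h]; exact huw
  rw [hsub, Set.ncard_singleton]

lemma thinRadical_star {i : Fin (d + 1)} (hi : i ∈ S.thinRadical) :
    S.star i ∈ S.thinRadical := S.thin_star hi

lemma sn_zero_mem {T : Set (Fin (d + 1))} (hT : S.IsStronglyNormal T) : (0 : Fin (d + 1)) ∈ T :=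
  S.zero_mem_closed hT.1

lemma mem_cmul_singleton {i j k : Fin (d + 1)} (h : 0 < S.pNum i j k) :
    k ∈ S.cmul {i} {j} := ⟨i, rfl, j, rfl, h⟩

/-- `R_{y*} R_y ⊆ T` for strongly normal `T`. -/
lemma star_cmul_self_sn {T : Set (Fin (d + 1))} (hT : S.IsStronglyNormal T) (y : Fin (d + 1)) :
    S.cmul {S.star y} {y} ⊆ T := by
  rintro k ⟨u, hu, v, hv, hp⟩
  rw [Set.mem_singleton_iff] at hu hv
  rw [hu, hv] at hp
  apply hT.2 y
  exact ⟨S.star y, ⟨S.star y, rfl, 0, S.sn_zero_mem hT, S.pNum_zero_right⟩, y, rfl, hp⟩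

/-- `R_i T ⊆ T R_i` for strongly normal `T`. -/
lemma sn_comm {T : Set (Fin (d + 1))} (hT : S.IsStronglyNormal T) (i : Fin (d + 1)) :
    S.cmul {i} T ⊆ S.cmul T {i} := by
  rintro k ⟨u, hu, t, ht, hp⟩
  rw [Set.mem_singleton_iff] at hu
  rw [hu] at hp
  obtain ⟨⟨x, w⟩, hxw⟩ := S.r_nonempty k
  obtain ⟨u0, hu0⟩ := S.exists_in i w
  obtain ⟨t', ht', _⟩ := S.existsUnique_rel (x, u0)
  have hu0' : (w, u0) ∈ S.r (S.star i) := by rw [S.mem_star]; exact hu0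
  have ht'T : t' ∈ T := by
    have hsn := hT.2 (S.star i)
    rw [S.star_star] at hsn
    apply hsn
    refine ⟨k, ⟨i, rfl, t, ht, hp⟩, S.star i, rfl, ?_⟩
    exact S.pNum_pos ht' hxw hu0'
  refine ⟨t', ht'T, i, rfl, S.pNum_pos hxw ht' hu0⟩

lemma univ_sn : S.IsStronglyNormal (Set.univ : Set (Fin (d + 1))) := by
  refine ⟨⟨⟨0, trivial⟩, fun k _ => trivial⟩, fun i k _ => trivial⟩

lemma thinResidue_subset {T : Set (Fin (d + 1))} (hT : S.IsStronglyNormal T) :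
    S.thinResidue ⊆ T := fun t ht => Set.mem_sInter.mp ht T hT

lemma thinResidue_sn : S.IsStronglyNormal S.thinResidue := by
  have hz : (0 : Fin (d + 1)) ∈ S.thinResidue :=
    Set.mem_sInter.mpr fun T hT => S.sn_zero_mem hT
  constructor
  · constructor
    · exact ⟨0, hz⟩
    · intro k hk
      refine Set.mem_sInter.mpr fun T hT => ?_
      apply hT.1.2
      refine S.cmul_mono ?_ (S.thinResidue_subset hT) hk
      rintro j ⟨t, ht, rfl⟩
      exact ⟨t, S.thinResidue_subset hT ht, rfl⟩
  · intro i k hk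
    refine Set.mem_sInter.mpr fun T hT => ?_
    apply hT.2 i
    exact S.cmul_mono (S.cmul_mono (subset_refl _) (S.thinResidue_subset hT)) (subset_refl _) hk

end AssocScheme

end Aux

/-- `O^ϑ(S)O_ϑ(S)` is a closed subset of `S` and a singular subset of `S`. -/
theorem isClosedSubset_and_isSingular_cmul_thinResidue_thinRadical
    {X : Type*} [Fintype X] [Nonempty X] {d : ℕ} (S : AssocScheme X d) :
    S.IsClosedSubset (S.cmul S.thinResidue S.thinRadical) ∧
      S.IsSingular (S.cmul S.thinResidue S.thinRadical) := by
  set T := S.thinResidue with hTdef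
  set H := S.thinRadical with hHdef
  have hsn := S.thinResidue_sn
  have hTcl : S.IsClosedSubset T := hsn.1
  have h0T : (0 : Fin (d + 1)) ∈ T := S.zero_mem_closed hTcl
  have h0H : (0 : Fin (d + 1)) ∈ H := S.val_zero
  have hTT : S.cmul T T ⊆ T := S.cmul_self_closed hTcl
  have hHH : S.cmul H H ⊆ H := by
    rintro k ⟨i, hi, j, hj, hp⟩
    exact S.thin_mul hi hj hp
  have hHT : S.cmul H T ⊆ S.cmul T H := by
    rintro k ⟨h, hh, t, ht, hp⟩
    have : k ∈ S.cmul T {h} := S.sn_comm hsn h ⟨h, rfl, t, ht, hp⟩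
    exact S.cmul_mono (subset_refl T) (Set.singleton_subset_iff.mpr hh) this
  have hHU : S.cmul H (S.cmul T H) ⊆ S.cmul T H := by
    rw [← S.cmul_assoc]
    refine subset_trans (S.cmul_mono hHT (subset_refl H)) ?_
    rw [S.cmul_assoc]
    exact S.cmul_mono (subset_refl T) hHH
  have hTU : S.cmul T (S.cmul T H) ⊆ S.cmul T H := by
    rw [← S.cmul_assoc]
    exact S.cmul_mono hTT (subset_refl H)
  have hUU : S.cmul (S.cmul T H) (S.cmul T H) ⊆ S.cmul T H := by
    rw [S.cmul_assoc]
    exact subset_trans (S.cmul_mono (subset_refl T) hHU) hTU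
  have hstarU : S.star '' (S.cmul T H) ⊆ S.cmul T H := by
    rintro j ⟨k, ⟨t, ht, h, hh, hp⟩, rfl⟩
    apply hHT
    exact ⟨S.star h, S.thinRadical_star hh, S.star t, S.star_mem_closed hTcl ht,
      S.pNum_star_star hp⟩
  constructor
  · constructor
    · exact ⟨0, 0, h0T, 0, h0H, S.pNum_zero_right⟩
    · exact subset_trans (S.cmul_mono hstarU (subset_refl _)) hUU
  · constructor
    · intro h hh
      exact ⟨0, h0T, h, hh, S.pNum_zero_left⟩
    · intro x hx y z hz
      rw [S.cmul_assoc, S.cmul_assoc, ← S.cmul_assoc {S.star y} {y} {z}]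
      have step1 : S.cmul (S.cmul {S.star y} {y}) {z} ⊆ S.cmul T (S.cmul T H) :=
        S.cmul_mono (S.star_cmul_self_sn hsn y) (Set.singleton_subset_iff.mpr hz)
      refine subset_trans (S.cmul_mono (subset_refl {x}) (subset_trans step1 hTU)) ?_
      rw [← S.cmul_assoc]
      refine subset_trans (S.cmul_mono (S.sn_comm hsn x) (subset_refl H)) ?_
      rw [S.cmul_assoc]
      refine subset_trans (S.cmul_mono (subset_refl T) ?_) hTU
      refine subset_trans (S.cmul_mono (Set.singleton_subset_iff.mpr hx) (subset_refl H)) ?_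
      exact fun k hk => ⟨0, h0T, k, hHH hk, S.pNum_zero_left⟩
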